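/- arXiv:2407.18816 — 2 statements merged into one kernel-verified Lean document; each statement's English description precedes it below -/
import Mathlib

section
/- Let S = conv(v₀, …, v_d) ⊂ ℝ^d be a d-simplex spanned by affinely independent points, let F : S → S be continuous, and for i = 0, …, d define C_i := {x ∈ S : λ_i(F(x)) ≤ λ_i(x)}, where λ_i denotes the i-th barycentric coordinate with respect to v₀, …, v_d. Then each C_i is a closed subset of S, and for every nonempty subset {i₁, …, iₙ} ⊆ {0, …, d} one has conv(v_{i₁}, …, v_{iₙ}) ⊆ C_{i₁} ∪ ⋯ ∪ C_{iₙ}. -/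
/-!
If `x` lies in the face spanned by the vertices indexed by `I`, its barycentric coordinates
over `I` sum to `1`, while those of any point of the simplex, such as `F x`, sum to at most `1`
over `I`. Hence the coordinates indexed by `I` cannot all strictly increase from `x` to `F x`.
-/

namespace AffineBasis

variable {ι R E : Type*} [AddCommGroup E]

section PartialOrder

variable [Ring R] [PartialOrder R] [Module R E] (b : AffineBasis ι R E)

theorem coord_eq_zero_of_mem_convexHull_image {I : Set ι} {i : ι} (hi : i ∉ I) {x : E}
    (hx : x ∈ convexHull R (b '' I)) : b.coord i x = 0 := by
  have hvertices : b.coord i '' (b '' I) ⊆ {0} := by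
    rintro _ ⟨_, ⟨j, hj, rfl⟩, rfl⟩
    exact b.coord_apply_ne (ne_of_mem_of_not_mem hj hi).symm
  have hx' : b.coord i x ∈ convexHull R (b.coord i '' (b '' I)) := by
    rw [← AffineMap.image_convexHull]
    exact Set.mem_image_of_mem _ hx
  simpa using convexHull_min hvertices (convex_singleton 0) hx'

variable [Fintype ι]

theorem sum_coord_eq_one_of_mem_convexHull_image {I : Finset ι} {x : E}
    (hx : x ∈ convexHull R (b '' I)) : ∑ i ∈ I, b.coord i x = 1 := by
  rw [← b.sum_coord_apply_eq_one x]
  exact Finset.sum_subset I.subset_univ fun i _ hi =>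
    b.coord_eq_zero_of_mem_convexHull_image (Finset.mem_coe.not.mpr hi) hx

end PartialOrder

variable [Field R] [LinearOrder R] [IsStrictOrderedRing R] [Module R E] (b : AffineBasis ι R E)
  [Fintype ι]

theorem exists_coord_le_of_mem_convexHull_image {I : Finset ι} (hI : I.Nonempty) {x y : E}
    (hx : x ∈ convexHull R (b '' I)) (hy : y ∈ convexHull R (Set.range b)) :
    ∃ i ∈ I, b.coord i y ≤ b.coord i x := by
  by_contra! hlt
  have hy_nonneg : ∀ i, 0 ≤ b.coord i y := by
    rwa [b.convexHull_eq_nonneg_coord] at hy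
  refine lt_irrefl (1 : R) ?_
  calc
    (1 : R) = ∑ i ∈ I, b.coord i x := (b.sum_coord_eq_one_of_mem_convexHull_image hx).symm
    _ < ∑ i ∈ I, b.coord i y := Finset.sum_lt_sum_of_nonempty hI hlt
    _ ≤ ∑ i, b.coord i y :=
      Finset.sum_le_sum_of_subset_of_nonneg I.subset_univ fun i _ _ => hy_nonneg i
    _ = 1 := b.sum_coord_apply_eq_one y

end AffineBasis

/-- **The sets `C_i` are closed and satisfy the KKM covering condition.**
Let `S = conv(v₀, …, v_d) ⊂ ℝ^d` be a `d`-simplex spanned by affinely independent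
points (equivalently, the vertices `b i` of an affine basis `b` of `ℝ^d`, whose
barycentric coordinates are `λ_i = b.coord i`), let `F : S → S` be continuous and
set `C_i := {x ∈ S : λ_i (F x) ≤ λ_i x}`.  Then each `C_i` is a closed subset of
`S`, and for every nonempty index set `I = {i₁, …, iₙ} ⊆ {0, …, d}` one has
`conv(v_{i₁}, …, v_{iₙ}) ⊆ C_{i₁} ∪ ⋯ ∪ C_{iₙ}`. -/
theorem Ci_closed_and_cover (d : ℕ)
    (b : AffineBasis (Fin (d + 1)) ℝ (EuclideanSpace ℝ (Fin d)))
    (S : Set (EuclideanSpace ℝ (Fin d)))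
    (hS : S = convexHull ℝ (Set.range ⇑b))
    (F : EuclideanSpace ℝ (Fin d) → EuclideanSpace ℝ (Fin d))
    (hF : Set.MapsTo F S S) (hFc : ContinuousOn F S)
    (C : Fin (d + 1) → Set (EuclideanSpace ℝ (Fin d)))
    (hC : ∀ i, C i = {x | x ∈ S ∧ b.coord i (F x) ≤ b.coord i x}) :
    (∀ i, IsClosed (C i) ∧ C i ⊆ S) ∧
    (∀ I : Finset (Fin (d + 1)), I.Nonempty →
      convexHull ℝ (⇑b '' (I : Set (Fin (d + 1)))) ⊆ ⋃ i ∈ I, C i) := by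
  have hS_closed : IsClosed S := hS ▸ (Set.finite_range b).isClosed_convexHull ℝ
  refine ⟨fun i => ⟨?_, hC i ▸ Set.sep_subset S _⟩, fun I hI x hx => ?_⟩
  · rw [hC i]
    exact hS_closed.isClosed_le ((continuous_barycentric_coord b i).comp_continuousOn hFc)
      (continuous_barycentric_coord b i).continuousOn
  · have hxS : x ∈ S := hS ▸ convexHull_mono (Set.image_subset_range _ _) hx
    obtain ⟨i, hi, hle⟩ := b.exists_coord_le_of_mem_convexHull_image hI hx (hS ▸ hF hxS)
    exact Set.mem_biUnion hi (hC i ▸ ⟨hxS, hle⟩)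
end

section
/- Let d = 2 and let S = conv(0, e₁, e₂) ⊂ ℝ² be the unit 2-simplex. After bisecting S at the midpoint of its unique longest edge {e₁, e₂} (yielding the two halves conv(0, e₁, m) and conv(0, e₂, m) with m = (e₁+e₂)/2), and then bisecting either half along one of its longest edges, every 2-simplex produced that contains the vertex e₁ (respectively e₂, respectively 0) is congruent to the original simplex S scaled by 1/2; in particular, the subsimplex of the twice-refined triangulation containing e₁ has one edge lying on the line through 0 and e₁ and one edge lying on the line through e₁ and e₂, each of half the original length, so it is the image of S under the homothety with center e₁ and ratio 1/2. -/
/-!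
The longest edge of `S = conv(0, e₁, e₂)` is `[e₁, e₂]`, and in each half the longest edge is the
leg `[0, eᵢ]` of length `1` (the other two edges have length `√2 / 2`), so two bisections produce
exactly four triangles. The two containing `e₁` or `e₂` are the images of `S` under the homothety
of ratio `1 / 2` centred at that vertex; the two containing `0` are the mirror images of these in
the perpendicular bisector of `[0, eᵢ]`.
-/

/-- Longest-edge bisection of a `d`-simplex given by its vertices `a 0, …, a d`:
choose an edge `{a i, a j}` of maximal length among all edges and replace one of
its two endpoints by the midpoint `(a i + a j) / 2`, obtaining (the vertex tuple
of) one of the two halves of the simplex. -/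
def LongestEdgeBisect {d : ℕ} (a c : Fin (d + 1) → EuclideanSpace ℝ (Fin d)) : Prop :=
  ∃ i j : Fin (d + 1), i ≠ j ∧
    (∀ k l : Fin (d + 1), dist (a k) (a l) ≤ dist (a i) (a j)) ∧
    (c = Function.update a i (midpoint ℝ (a i) (a j)) ∨
     c = Function.update a j (midpoint ℝ (a i) (a j)))

open EuclideanGeometry AffineSubspace AffineMap

theorem LongestEdgeBisect.eq_update_of_forall_dist_lt {d : ℕ}
    {a c : Fin (d + 1) → EuclideanSpace ℝ (Fin d)} {p q : Fin (d + 1)}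
    (h : LongestEdgeBisect a c)
    (hpq : ∀ k l, s(k, l) ≠ s(p, q) → dist (a k) (a l) < dist (a p) (a q)) :
    c = Function.update a p (midpoint ℝ (a p) (a q)) ∨
      c = Function.update a q (midpoint ℝ (a p) (a q)) := by
  obtain ⟨i, j, -, hmax, hc⟩ := h
  have hij : s(i, j) = s(p, q) := by
    by_contra hne
    exact (hmax p q).not_gt (hpq i j hne)
  rcases Sym2.eq_iff.1 hij with ⟨rfl, rfl⟩ | ⟨rfl, rfl⟩
  · exact hc
  · rw [midpoint_comm] at hc
    exact hc.symm

theorem forall_dist_lt_of_triangle {α : Type*} [PseudoMetricSpace α] {a : Fin 3 → α}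
    {p q r : Fin 3} (hpq : p ≠ q) (hpr : p ≠ r) (hqr : q ≠ r)
    (hp : dist (a p) (a r) < dist (a p) (a q)) (hq : dist (a q) (a r) < dist (a p) (a q)) :
    ∀ k l, s(k, l) ≠ s(p, q) → dist (a k) (a l) < dist (a p) (a q) := by
  have hmem : ∀ x, x = p ∨ x = q ∨ x = r := by
    clear hp hq; revert p q r; decide
  have hpos : 0 < dist (a p) (a q) := dist_nonneg.trans_lt hp
  intro k l hkl
  rcases hmem k with rfl | rfl | rfl <;> rcases hmem l with rfl | rfl | rfl <;>
    simp_all [dist_comm]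

theorem dist_homothety_homothety {𝕜 V P : Type*} [NormedField 𝕜] [SeminormedAddCommGroup V]
    [NormedSpace 𝕜 V] [PseudoMetricSpace P] [NormedAddTorsor V P] (c x y : P) (r : 𝕜) :
    dist (homothety c r x) (homothety c r y) = ‖r‖ * dist x y := by
  simp [homothety_apply, dist_eq_norm_vsub V, ← smul_sub, norm_smul]

def IsHalfScaledImage {P : Type*} [PseudoMetricSpace P] (s s' : Set P) : Prop :=
  ∃ T : P → P, (∀ x y, dist (T x) (T y) = dist x y / 2) ∧ s = T '' s'

theorem isHalfScaledImage_homothety {V P : Type*} [SeminormedAddCommGroup V] [NormedSpace ℝ V]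
    [PseudoMetricSpace P] [NormedAddTorsor V P] (c : P) (s : Set P) :
    IsHalfScaledImage (homothety c (1 / 2 : ℝ) '' s) s :=
  ⟨_, fun x y => by rw [dist_homothety_homothety]; norm_num; ring, rfl⟩

theorem IsHalfScaledImage.image_isometry {P : Type*} [PseudoMetricSpace P] {s s' : Set P}
    {f : P → P} (h : IsHalfScaledImage s s') (hf : Isometry f) : IsHalfScaledImage (f '' s) s' := by
  obtain ⟨T, hT, rfl⟩ := h
  exact ⟨f ∘ T, fun x y => by rw [Function.comp_apply, Function.comp_apply, hf.dist_eq, hT],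
    (Set.image_comp f T s').symm⟩

namespace EuclideanGeometry

variable {V P : Type*} [NormedAddCommGroup V] [InnerProductSpace ℝ V] [MetricSpace P]
  [NormedAddTorsor V P]

instance (p q : P) : Nonempty (perpBisector p q) := perpBisector_nonempty.to_subtype

variable [FiniteDimensional ℝ V]

theorem reflection_perpBisector_left (p q : P) : reflection (perpBisector p q) p = q := by
  have hv : p -ᵥ midpoint ℝ p q ∈ (perpBisector p q).directionᗮ := by
    rw [direction_perpBisector, Submodule.orthogonal_orthogonal, left_vsub_midpoint,
      ← neg_vsub_eq_vsub_rev, ← Set.neg_singleton, Submodule.span_neg]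
    exact Submodule.smul_mem _ _ (Submodule.mem_span_singleton_self _)
  have := reflection_orthogonal_vadd (midpoint_mem_perpBisector p q) hv
  rwa [vsub_vadd, neg_vsub_eq_vsub_rev, midpoint_vsub_left, ← right_vsub_midpoint,
    vsub_vadd] at this

theorem image_reflection_perpBisector_triangle {p q c : P} (hc : dist c p = dist c q) :
    reflection (perpBisector p q) '' {midpoint ℝ q p, p, c} = {midpoint ℝ q p, q, c} := by
  have hm : reflection (perpBisector p q) (midpoint ℝ q p) = midpoint ℝ q p := by
    rw [reflection_eq_self_iff, midpoint_comm]
    exact midpoint_mem_perpBisector p q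
  have hc' : reflection (perpBisector p q) c = c :=
    (reflection_eq_self_iff c).2 (mem_perpBisector_iff_dist_eq.2 hc)
  simp only [Set.image_insert_eq, Set.image_singleton, hm, hc', reflection_perpBisector_left]

end EuclideanGeometry

local notation "ℝ²" => EuclideanSpace ℝ (Fin 2)
local notation "e₁" => EuclideanSpace.single (0 : Fin 2) (1 : ℝ)
local notation "e₂" => EuclideanSpace.single (1 : Fin 2) (1 : ℝ)

theorem EuclideanSpace.midpoint_apply {ι : Type*} (x y : EuclideanSpace ℝ ι) (i : ι) :
    midpoint ℝ x y i = (x i + y i) / 2 := by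
  simp only [midpoint_eq_smul_add, invOf_eq_inv, PiLp.smul_apply, PiLp.add_apply, smul_eq_mul]
  ring

theorem EuclideanSpace.dist_lt_dist_iff_fin_two (x y z w : ℝ²) :
    dist x y < dist z w ↔
      (x 0 - y 0) ^ 2 + (x 1 - y 1) ^ 2 < (z 0 - w 0) ^ 2 + (z 1 - w 1) ^ 2 := by
  simp only [← sq_lt_sq₀ dist_nonneg dist_nonneg, EuclideanSpace.dist_sq_eq, Fin.sum_univ_two,
    Real.dist_eq, sq_abs]

theorem EuclideanSpace.dist_eq_dist_iff_fin_two (x y z w : ℝ²) :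
    dist x y = dist z w ↔
      (x 0 - y 0) ^ 2 + (x 1 - y 1) ^ 2 = (z 0 - w 0) ^ 2 + (z 1 - w 1) ^ 2 := by
  simp only [← sq_eq_sq₀ dist_nonneg dist_nonneg, EuclideanSpace.dist_sq_eq, Fin.sum_univ_two,
    Real.dist_eq, sq_abs]

theorem longestEdgeBisect_unitTriangle {w : Fin 3 → ℝ²}
    (h : LongestEdgeBisect ![0, e₁, e₂] w) :
    w = ![0, e₁, midpoint ℝ e₁ e₂] ∨ w = ![0, midpoint ℝ e₁ e₂, e₂] := by
  have h₁ : dist e₁ 0 < dist e₁ e₂ := by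
    rw [EuclideanSpace.dist_lt_dist_iff_fin_two]; norm_num
  have h₂ : dist e₂ 0 < dist e₁ e₂ := by
    rw [EuclideanSpace.dist_lt_dist_iff_fin_two]; norm_num
  rcases h.eq_update_of_forall_dist_lt (p := 1) (q := 2) <|
    forall_dist_lt_of_triangle (r := 0) (by decide) (by decide) (by decide) h₁ h₂ with rfl | rfl
  · right; funext i; fin_cases i <;> rfl
  · left; funext i; fin_cases i <;> rfl

theorem longestEdgeBisect_half₁ {t : Fin 3 → ℝ²}
    (h : LongestEdgeBisect ![0, e₁, midpoint ℝ e₁ e₂] t) :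
    t = ![midpoint ℝ 0 e₁, e₁, midpoint ℝ e₁ e₂] ∨ t = ![0, midpoint ℝ 0 e₁, midpoint ℝ e₁ e₂] := by
  have h₁ : dist 0 (midpoint ℝ e₁ e₂) < dist 0 e₁ := by
    rw [EuclideanSpace.dist_lt_dist_iff_fin_two]; norm_num [EuclideanSpace.midpoint_apply]
  have h₂ : dist e₁ (midpoint ℝ e₁ e₂) < dist 0 e₁ := by
    rw [EuclideanSpace.dist_lt_dist_iff_fin_two]; norm_num [EuclideanSpace.midpoint_apply]
  rcases h.eq_update_of_forall_dist_lt (p := 0) (q := 1) <|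
    forall_dist_lt_of_triangle (r := 2) (by decide) (by decide) (by decide) h₁ h₂ with rfl | rfl
  · left; funext i; fin_cases i <;> rfl
  · right; funext i; fin_cases i <;> rfl

theorem longestEdgeBisect_half₂ {t : Fin 3 → ℝ²}
    (h : LongestEdgeBisect ![0, midpoint ℝ e₁ e₂, e₂] t) :
    t = ![midpoint ℝ 0 e₂, midpoint ℝ e₁ e₂, e₂] ∨ t = ![0, midpoint ℝ e₁ e₂, midpoint ℝ 0 e₂] := by
  have h₁ : dist 0 (midpoint ℝ e₁ e₂) < dist 0 e₂ := by
    rw [EuclideanSpace.dist_lt_dist_iff_fin_two]; norm_num [EuclideanSpace.midpoint_apply]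
  have h₂ : dist e₂ (midpoint ℝ e₁ e₂) < dist 0 e₂ := by
    rw [EuclideanSpace.dist_lt_dist_iff_fin_two]; norm_num [EuclideanSpace.midpoint_apply]
  rcases h.eq_update_of_forall_dist_lt (p := 0) (q := 2) <|
    forall_dist_lt_of_triangle (r := 1) (by decide) (by decide) (by decide) h₁ h₂ with rfl | rfl
  · left; funext i; fin_cases i <;> rfl
  · right; funext i; fin_cases i <;> rfl

theorem longestEdgeBisect_twice_unitTriangle {w t : Fin 3 → ℝ²}
    (hw : LongestEdgeBisect ![0, e₁, e₂] w) (ht : LongestEdgeBisect w t) :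
    t = ![midpoint ℝ 0 e₁, e₁, midpoint ℝ e₁ e₂] ∨ t = ![0, midpoint ℝ 0 e₁, midpoint ℝ e₁ e₂] ∨
      t = ![midpoint ℝ 0 e₂, midpoint ℝ e₁ e₂, e₂] ∨
        t = ![0, midpoint ℝ e₁ e₂, midpoint ℝ 0 e₂] := by
  rcases longestEdgeBisect_unitTriangle hw with rfl | rfl
  · rcases longestEdgeBisect_half₁ ht with rfl | rfl <;> simp
  · rcases longestEdgeBisect_half₂ ht with rfl | rfl <;> simp

theorem range_corner₁_eq_homothety :
    Set.range ![midpoint ℝ 0 e₁, e₁, midpoint ℝ e₁ e₂] =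
      homothety e₁ (1 / 2 : ℝ) '' Set.range ![0, e₁, e₂] := by
  simp [Matrix.range_cons, Set.image_insert_eq, homothety_inv_two, midpoint_comm, Set.insert_comm]

theorem range_corner₂_eq_homothety :
    Set.range ![midpoint ℝ 0 e₂, midpoint ℝ e₁ e₂, e₂] =
      homothety e₂ (1 / 2 : ℝ) '' Set.range ![0, e₁, e₂] := by
  simp [Matrix.range_cons, Set.image_insert_eq, homothety_inv_two, midpoint_comm, Set.insert_comm]

theorem range_origin₁_eq_reflection :
    Set.range ![0, midpoint ℝ 0 e₁, midpoint ℝ e₁ e₂] =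
      reflection (perpBisector e₁ 0) '' Set.range ![midpoint ℝ 0 e₁, e₁, midpoint ℝ e₁ e₂] := by
  have hm : dist (midpoint ℝ e₁ e₂) e₁ = dist (midpoint ℝ e₁ e₂) 0 := by
    rw [EuclideanSpace.dist_eq_dist_iff_fin_two]; norm_num [EuclideanSpace.midpoint_apply]
  simp only [Matrix.range_cons, Matrix.range_empty, Set.union_empty, Set.singleton_union]
  rw [image_reflection_perpBisector_triangle hm, Set.insert_comm]

theorem range_origin₂_eq_reflection :
    Set.range ![0, midpoint ℝ e₁ e₂, midpoint ℝ 0 e₂] =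
      reflection (perpBisector e₂ 0) '' Set.range ![midpoint ℝ 0 e₂, midpoint ℝ e₁ e₂, e₂] := by
  have hm : dist (midpoint ℝ e₁ e₂) e₂ = dist (midpoint ℝ e₁ e₂) 0 := by
    rw [EuclideanSpace.dist_eq_dist_iff_fin_two]; norm_num [EuclideanSpace.midpoint_apply]
  simp only [Matrix.range_cons, Matrix.range_empty, Set.union_empty, Set.singleton_union]
  rw [Set.pair_comm (midpoint ℝ e₁ e₂) e₂, image_reflection_perpBisector_triangle hm,
    Set.insert_comm (midpoint ℝ 0 e₂), Set.pair_comm (midpoint ℝ 0 e₂)]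

theorem isHalfScaledImage_of_longestEdgeBisect_twice {w t : Fin 3 → ℝ²}
    (hw : LongestEdgeBisect ![0, e₁, e₂] w) (ht : LongestEdgeBisect w t) :
    IsHalfScaledImage (Set.range t) (Set.range ![0, e₁, e₂]) := by
  rcases longestEdgeBisect_twice_unitTriangle hw ht with rfl | rfl | rfl | rfl
  · rw [range_corner₁_eq_homothety]
    exact isHalfScaledImage_homothety _ _
  · rw [range_origin₁_eq_reflection, range_corner₁_eq_homothety]
    exact (isHalfScaledImage_homothety _ _).image_isometry (reflection _).isometry
  · rw [range_corner₂_eq_homothety]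
    exact isHalfScaledImage_homothety _ _
  · rw [range_origin₂_eq_reflection, range_corner₂_eq_homothety]
    exact (isHalfScaledImage_homothety _ _).image_isometry (reflection _).isometry

theorem range_eq_homothety_of_longestEdgeBisect_twice {w t : Fin 3 → ℝ²}
    (hw : LongestEdgeBisect ![0, e₁, e₂] w) (ht : LongestEdgeBisect w t)
    (he : e₁ ∈ Set.range t) :
    Set.range t = homothety e₁ (1 / 2 : ℝ) '' Set.range ![0, e₁, e₂] := by
  rcases longestEdgeBisect_twice_unitTriangle hw ht with rfl | rfl | rfl | rfl
  · exact range_corner₁_eq_homothety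
  all_goals
    simp [Matrix.range_cons, PiLp.ext_iff, Fin.forall_fin_two, EuclideanSpace.midpoint_apply] at he

/-- **Two-dimensional base case of Theorem 1 of the paper.**
Let `S = conv(0, e₁, e₂) ⊂ ℝ²` be the unit 2-simplex.  After bisecting `S` along
its unique longest edge `{e₁, e₂}` and then bisecting either half along one of its
longest edges, every 2-simplex `t` produced that contains `e₁` (respectively `e₂`,
respectively `0`) as a vertex is congruent to `S` scaled by `1/2` (i.e. is the
image of `S` under a map multiplying all distances by `1/2`); moreover the
produced subsimplex containing `e₁` is the image of `S` under the homothety with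
center `e₁` and ratio `1/2`. -/
theorem unit_triangle_bisection_base_case
    (e1 e2 : EuclideanSpace ℝ (Fin 2))
    (he1 : e1 = EuclideanSpace.single 0 1)
    (he2 : e2 = EuclideanSpace.single 1 1)
    (u : Fin 3 → EuclideanSpace ℝ (Fin 2))
    (hu : u = ![0, e1, e2])
    (w t : Fin 3 → EuclideanSpace ℝ (Fin 2))
    (hw : LongestEdgeBisect u w) (ht : LongestEdgeBisect w t) :
    ((e1 ∈ Set.range t →
        ∃ T : EuclideanSpace ℝ (Fin 2) → EuclideanSpace ℝ (Fin 2),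
          (∀ x y, dist (T x) (T y) = dist x y / 2) ∧
          Set.range t = T '' Set.range u) ∧
     (e2 ∈ Set.range t →
        ∃ T : EuclideanSpace ℝ (Fin 2) → EuclideanSpace ℝ (Fin 2),
          (∀ x y, dist (T x) (T y) = dist x y / 2) ∧
          Set.range t = T '' Set.range u) ∧
     ((0 : EuclideanSpace ℝ (Fin 2)) ∈ Set.range t →
        ∃ T : EuclideanSpace ℝ (Fin 2) → EuclideanSpace ℝ (Fin 2),
          (∀ x y, dist (T x) (T y) = dist x y / 2) ∧
          Set.range t = T '' Set.range u)) ∧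
    (e1 ∈ Set.range t →
      convexHull ℝ (Set.range t) =
        AffineMap.homothety e1 (1 / 2 : ℝ) '' convexHull ℝ (Set.range u)) := by
  subst he1 he2 hu
  obtain ⟨T, hT, hr⟩ := isHalfScaledImage_of_longestEdgeBisect_twice hw ht
  refine ⟨⟨fun _ => ⟨T, hT, hr⟩, fun _ => ⟨T, hT, hr⟩, fun _ => ⟨T, hT, hr⟩⟩, fun he => ?_⟩
  rw [range_eq_homothety_of_longestEdgeBisect_twice hw ht he, AffineMap.image_convexHull]
end
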